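/- Let K be a field, V a finite-dimensional K-vector space, ψ : V → V a K-linear endomorphism, and 0 = F_m ⊆ F_{m−1} ⊆ ⋯ ⊆ F_1 ⊆ F_0 = V a finite decreasing chain of ψ-invariant subspaces. Suppose c_0, c_1, …, c_{m−1} ∈ K are pairwise distinct scalars such that for every i with 0 ≤ i ≤ m−1 one has (ψ − c_i·id)(F_i) ⊆ F_{i+1}, i.e. ψ acts as multiplication by c_i on the graded piece F_i/F_{i+1}. Then V is the internal direct sum of the eigenspaces Ker(ψ − c_i·id) for 0 ≤ i ≤ m−1, and for each i the dimension of Ker(ψ − c_i·id) equals the dimension of F_i/F_{i+1}. -/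
import Mathlib


/-- Abstraction of the key linear-algebra argument in the proof of Theorem 4.1
(following Scholze): given a finite decreasing chain `0 = F m ⊆ ⋯ ⊆ F 0 = V` of
`ψ`-invariant subspaces of a finite-dimensional `K`-vector space `V`, and
pairwise distinct scalars `c 0, …, c (m-1)` such that `ψ` acts as
multiplication by `c i` on each graded piece `F i / F (i+1)`, the space `V` is
the internal direct sum of the eigenspaces `Ker(ψ - c i • id)` and the
dimension of each eigenspace equals the dimension of the corresponding graded
piece. -/
theorem isInternal_ker_of_filtration_with_distinct_scalars
    {K V : Type*} [Field K] [AddCommGroup V] [Module K V] [FiniteDimensional K V]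
    (ψ : Module.End K V) (m : ℕ) (F : ℕ → Submodule K V) (c : ℕ → K)
    (hF0 : F 0 = ⊤) (hFm : F m = ⊥)
    (hchain : ∀ i, F (i + 1) ≤ F i)
    (hinv : ∀ i, ∀ x ∈ F i, ψ x ∈ F i)
    (hdist : ∀ i < m, ∀ j < m, c i = c j → i = j)
    (hgr : ∀ i < m, ∀ x ∈ F i, ψ x - c i • x ∈ F (i + 1)) :
    DirectSum.IsInternal
      (fun i : Fin m => LinearMap.ker (ψ - c (i : ℕ) • (1 : Module.End K V))) ∧
    ∀ i : Fin m,
      Module.finrank K (LinearMap.ker (ψ - c (i : ℕ) • (1 : Module.End K V))) =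
        Module.finrank K
          (↥(F (i : ℕ)) ⧸ (F ((i : ℕ) + 1)).comap (F (i : ℕ)).subtype) := by
  -- membership in the kernels is the eigenvector equation
  have hEdef : ∀ (i : ℕ) (x : V),
      x ∈ LinearMap.ker (ψ - c i • (1 : Module.End K V)) ↔ ψ x = c i • x := by
    intro i x
    rw [LinearMap.mem_ker, LinearMap.sub_apply, LinearMap.smul_apply,
      Module.End.one_apply, sub_eq_zero]
  -- the filtration is antitone
  have hmono : ∀ a b : ℕ, a ≤ b → F b ≤ F a := by
    intro a b hab
    induction b with
    | zero =>
      have : a = 0 := Nat.le_zero.mp hab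
      subst this; exact le_rfl
    | succ n ih =>
      rcases Nat.lt_or_ge a (n + 1) with h | h
      · exact (hchain n).trans (ih (Nat.lt_succ_iff.mp h))
      · have : a = n + 1 := le_antisymm hab h
        subst this; exact le_rfl
  -- an eigenvector for `c i` lying in `F j` with `j ≠ i`, `j < m`, lies in `F (j+1)`
  have step : ∀ i < m, ∀ j < m, j ≠ i → ∀ x : V, ψ x = c i • x →
      x ∈ F j → x ∈ F (j + 1) := by
    intro i hi j hj hji x hx hxj
    have h1 : ψ x - c j • x ∈ F (j + 1) := hgr j hj x hxj
    rw [hx] at h1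
    have h2 : (c i - c j) • x ∈ F (j + 1) := by rw [sub_smul]; exact h1
    have hne : c i - c j ≠ 0 :=
      sub_ne_zero.mpr (fun h => hji (hdist j hj i hi h.symm))
    have h3 := (F (j + 1)).smul_mem (c i - c j)⁻¹ h2
    rwa [smul_smul, inv_mul_cancel₀ hne, one_smul] at h3
  -- eigenvectors for `c i` live in `F i`
  have eig_le : ∀ i < m, ∀ x : V, ψ x = c i • x → ∀ j ≤ i, x ∈ F j := by
    intro i hi x hx j hj
    induction j with
    | zero => rw [hF0]; trivial
    | succ n ih =>
      have hn : n < i := hj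
      exact step i hi n (lt_trans hn hi) (Nat.ne_of_lt hn) x hx (ih hn.le)
  -- an eigenvector for `c i` lying in `F (i+1)` is zero
  have eig_inf : ∀ i < m, ∀ x : V, ψ x = c i • x → x ∈ F (i + 1) → x = 0 := by
    intro i hi x hx hxi
    have key : ∀ k : ℕ, i + 1 ≤ k → k ≤ m → x ∈ F k := by
      intro k hk1 hk2
      induction k with
      | zero => omega
      | succ n ih =>
        rcases Nat.lt_or_ge n (i + 1) with h | h
        · have : n = i := by omega
          subst this; exact hxi
        · have hnm : n < m := by omega
          exact step i hi n hnm (by omega) x hx (ih h (by omega))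
    have : x ∈ F m := key m (by omega) le_rfl
    rwa [hFm, Submodule.mem_bot] at this
  -- existence of an eigenvector congruent to a given element of `F i` mod `F (i+1)`
  have exists_eig : ∀ (n k i : ℕ), i < m → m ≤ k + n → i + 1 ≤ k → ∀ x ∈ F i,
      ψ x - c i • x ∈ F k → ∃ y : V, ψ y = c i • y ∧ x - y ∈ F (i + 1) := by
    intro n
    induction n with
    | zero =>
      intro k i hi hk hik x hx hu
      have h0 : ψ x - c i • x ∈ F m := hmono m k (by omega) hu
      rw [hFm, Submodule.mem_bot, sub_eq_zero] at h0
      exact ⟨x, h0, by simpa using (F (i + 1)).zero_mem⟩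
    | succ n ih =>
      intro k i hi hk hik x hx hu
      rcases Nat.lt_or_ge k m with hkm | hkm
      · set u := ψ x - c i • x with hu_def
        have hcne : c i - c k ≠ 0 := by
          refine sub_ne_zero.mpr (fun h => ?_)
          have := hdist i hi k hkm h; omega
        set x' := x + (c i - c k)⁻¹ • u with hx'
        have huFi : u ∈ F i := hmono i k (by omega) hu
        have hx'F : x' ∈ F i := (F i).add_mem hx ((F i).smul_mem _ huFi)
        have hu' : ψ x' - c i • x' ∈ F (k + 1) := by
          have h1 : ψ x' - c i • x' = (c i - c k)⁻¹ • (ψ u - c k • u) := by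
            simp only [hx', hu_def, map_add, map_smul, map_sub]
            match_scalars <;> field_simp <;> ring
          rw [h1]
          exact (F (k + 1)).smul_mem _ (hgr k hkm u hu)
        obtain ⟨y, hy1, hy2⟩ := ih (k + 1) i hi (by omega) (by omega) x' hx'F hu'
        refine ⟨y, hy1, ?_⟩
        have hxx' : x - x' = -((c i - c k)⁻¹ • u) := by rw [hx']; abel
        have hmem : x - x' ∈ F (i + 1) := by
          rw [hxx']
          exact (F (i + 1)).neg_mem ((F (i + 1)).smul_mem _ (hmono (i + 1) k hik hu))
        have : x - y = (x - x') + (x' - y) := by abel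
        rw [this]
        exact (F (i + 1)).add_mem hmem hy2
      · have h0 : ψ x - c i • x ∈ F m := hmono m k hkm hu
        rw [hFm, Submodule.mem_bot, sub_eq_zero] at h0
        exact ⟨x, h0, by simpa using (F (i + 1)).zero_mem⟩
  -- the kernels span everything
  have htop : ∀ (n i : ℕ), m ≤ i + n →
      F i ≤ ⨆ j : Fin m, LinearMap.ker (ψ - c (j : ℕ) • (1 : Module.End K V)) := by
    intro n
    induction n with
    | zero =>
      intro i hi
      refine (hmono m i (by omega)).trans ?_
      rw [hFm]; exact bot_le
    | succ n ih =>
      intro i hi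
      rcases Nat.lt_or_ge i m with him | him
      · intro x hx
        obtain ⟨y, hy1, hy2⟩ :=
          exists_eig n (i + 1) i him (by omega) le_rfl x hx (hgr i him x hx)
        have hyE : y ∈ LinearMap.ker (ψ - c ((⟨i, him⟩ : Fin m) : ℕ) • (1 : Module.End K V)) :=
          (hEdef i y).mpr hy1
        have h1 : y ∈ ⨆ j : Fin m, LinearMap.ker (ψ - c (j : ℕ) • (1 : Module.End K V)) :=
          (le_iSup (fun j : Fin m =>
            LinearMap.ker (ψ - c (j : ℕ) • (1 : Module.End K V))) ⟨i, him⟩) hyE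
        have h2 : x - y ∈ ⨆ j : Fin m,
            LinearMap.ker (ψ - c (j : ℕ) • (1 : Module.End K V)) :=
          ih (i + 1) (by omega) hy2
        have : x = y + (x - y) := by abel
        rw [this]
        exact Submodule.add_mem _ h1 h2
      · refine (hmono m i him).trans ?_ |>.trans le_rfl
        intro x hx
        rw [hFm, Submodule.mem_bot] at hx
        simp [hx]
  have hsup : (⨆ j : Fin m, LinearMap.ker (ψ - c (j : ℕ) • (1 : Module.End K V))) = ⊤ := by
    refine top_unique ?_
    rw [← hF0]
    exact htop m 0 (by omega)
  -- independence of the kernels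
  have hindep : iSupIndep
      (fun i : Fin m => LinearMap.ker (ψ - c (i : ℕ) • (1 : Module.End K V))) := by
    have hinj : Function.Injective (fun i : Fin m => c (i : ℕ)) := by
      intro i j hij
      exact Fin.ext (hdist i i.isLt j j.isLt hij)
    have := (Module.End.eigenspaces_iSupIndep ψ).comp hinj
    convert this using 2 with i
    simp only [Function.comp_apply, Module.End.eigenspace_def]
  constructor
  · exact DirectSum.isInternal_submodule_of_iSupIndep_of_iSup_eq_top hindep hsup
  · intro i
    have him : (i : ℕ) < m := i.isLt
    set E := LinearMap.ker (ψ - c (i : ℕ) • (1 : Module.End K V)) with hE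
    set N := (F ((i : ℕ) + 1)).comap (F (i : ℕ)).subtype with hN
    have hle : E ≤ F (i : ℕ) := by
      intro x hx
      exact eig_le i him x ((hEdef i x).mp hx) i le_rfl
    let φ : E →ₗ[K] (↥(F (i : ℕ)) ⧸ N) := N.mkQ.comp (Submodule.inclusion hle)
    have hbij : Function.Bijective φ := by
      constructor
      · rw [← LinearMap.ker_eq_bot]
        rw [Submodule.eq_bot_iff]
        rintro ⟨x, hxE⟩ hx
        simp only [φ, LinearMap.mem_ker, LinearMap.comp_apply, Submodule.mkQ_apply,
          Submodule.Quotient.mk_eq_zero] at hx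
        have hxF : x ∈ F ((i : ℕ) + 1) := hx
        have : x = 0 := eig_inf i him x ((hEdef i x).mp hxE) hxF
        simp [this]
      · intro z
        obtain ⟨⟨x, hxF⟩, rfl⟩ := N.mkQ_surjective z
        obtain ⟨y, hy1, hy2⟩ :=
          exists_eig m ((i : ℕ) + 1) i him (by omega) le_rfl x hxF (hgr i him x hxF)
        have hyE : y ∈ E := (hEdef i y).mpr hy1
        refine ⟨⟨y, hyE⟩, ?_⟩
        simp only [φ, LinearMap.comp_apply, Submodule.mkQ_apply]
        rw [Submodule.Quotient.eq]
        have hyF : y ∈ F (i : ℕ) := hle hyE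
        show (⟨y, hyF⟩ - ⟨x, hxF⟩ : F (i : ℕ)) ∈ N
        have hyx : y - x = -(x - y) := by abel
        rw [hN, Submodule.mem_comap]
        have hsub : (F (i : ℕ)).subtype (⟨y, hyF⟩ - ⟨x, hxF⟩) = y - x := rfl
        rw [hsub, hyx]
        exact (F ((i : ℕ) + 1)).neg_mem hy2
    exact LinearEquiv.finrank_eq (LinearEquiv.ofBijective φ hbij)
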